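/- arXiv:2404.07040 — 3 statements merged into one kernel-verified Lean document; each statement's English description precedes it below -/
import Mathlib

section
/- Let A be a commutative ring and B a finite free A-algebra. Let π₁₂, π₂₃ : B ⊗[A] B → B ⊗[A] B ⊗[A] B be the A-algebra maps sending b ⊗ b' to b ⊗ b' ⊗ 1 and 1 ⊗ b ⊗ b', respectively. Let I, I', I'' be ideals of A such that for all b, b' ∈ B, if b·b' ∈ I''·B then b ∈ I·B or b' ∈ I'·B. Then for all α, β ∈ B ⊗[A] B, if π₁₂(α)·π₂₃(β) lies in I''·(B ⊗[A] B ⊗[A] B), then α ∈ I·(B ⊗[A] B) or β ∈ I'·(B ⊗[A] B). -/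
/-!
Fix an `A`-basis `e` of `B` and write `α = ∑ e i ⊗ αᵢ`, `β = ∑ βⱼ ⊗ e j` with `αᵢ, βⱼ ∈ B`.
Then `π₁₂(α) * π₂₃(β) = ∑ e i ⊗ αᵢ βⱼ ⊗ e j`, and an element of `B ⊗ B` lies in `J · (B ⊗ B)`
exactly when all its coefficients lie in `J · B`. So if `α ∉ I · (B ⊗ B)` and
`β ∉ I' · (B ⊗ B)`, some `αᵢ ∉ I · B` and `βⱼ ∉ I' · B`, although `αᵢ βⱼ ∈ I'' · B`.
-/

open TensorProduct

theorem Module.Basis.mem_ideal_smul_top_iff {S M ι : Type*} [CommRing S] [AddCommGroup M]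
    [Module S M] (b : Module.Basis ι S M) (J : Ideal S) (x : M) :
    x ∈ J • (⊤ : Submodule S M) ↔ ∀ i, b.repr x i ∈ J := by
  refine ⟨fun hx i => ?_, fun hx => ?_⟩
  · simpa using Submodule.smul_top_le_comap_smul_top J (b.coord i) hx
  · rw [← b.linearCombination_repr x, Finsupp.linearCombination_apply]
    exact Submodule.sum_mem _ fun i _ => Submodule.smul_mem_smul (hx i) Submodule.mem_top

theorem Ideal.mem_map_algebraMap_iff_mem_smul_top {R S : Type*} [CommRing R] [CommRing S]
    [Algebra R S] (J : Ideal R) (x : S) :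
    x ∈ J.map (algebraMap R S) ↔ x ∈ J • (⊤ : Submodule R S) := by
  rw [Ideal.smul_top_eq_map]; rfl

theorem Module.Basis.mem_map_algebraMap_iff {S C ι : Type*} [CommRing S] [CommRing C] [Algebra S C]
    (b : Module.Basis ι S C) (J : Ideal S) (x : C) :
    x ∈ J.map (algebraMap S C) ↔ ∀ i, b.repr x i ∈ J := by
  rw [Ideal.mem_map_algebraMap_iff_mem_smul_top, b.mem_ideal_smul_top_iff]

theorem LinearMap.apply_mem_map_algebraMap {R C D : Type*} [CommRing R] [CommRing C] [Algebra R C]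
    [CommRing D] [Algebra R D] (f : C →ₗ[R] D) {J : Ideal R} {x : C}
    (hx : x ∈ J.map (algebraMap R C)) : f x ∈ J.map (algebraMap R D) := by
  rw [Ideal.mem_map_algebraMap_iff_mem_smul_top] at hx ⊢
  exact Submodule.smul_top_le_comap_smul_top J f hx

namespace Module.Basis

variable {A B ι : Type*} [CommRing A] [CommRing B] [Algebra A B] (e : Basis ι A B)

noncomputable def rightCoord (j : ι) : B ⊗[A] B →ₗ[A] B :=
  ((Algebra.TensorProduct.basis B e).coord j).restrictScalars A

noncomputable def leftCoord (i : ι) : B ⊗[A] B →ₗ[A] B :=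
  e.rightCoord i ∘ₗ (TensorProduct.comm A B B).toLinearMap

@[simp]
theorem rightCoord_tmul (j : ι) (x y : B) : e.rightCoord j (x ⊗ₜ y) = e.repr y j • x := by
  simp [rightCoord, Algebra.smul_def, mul_comm]

@[simp]
theorem leftCoord_tmul (i : ι) (x y : B) : e.leftCoord i (x ⊗ₜ y) = e.repr x i • y := by
  simp [leftCoord]

theorem mem_map_algebraMap_iff_rightCoord (J : Ideal A) (β : B ⊗[A] B) :
    β ∈ J.map (algebraMap A (B ⊗[A] B)) ↔ ∀ j, e.rightCoord j β ∈ J.map (algebraMap A B) := by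
  rw [IsScalarTower.algebraMap_eq A B (B ⊗[A] B), ← Ideal.map_map,
    (Algebra.TensorProduct.basis B e).mem_map_algebraMap_iff]
  rfl

theorem mem_map_algebraMap_iff_leftCoord (J : Ideal A) (α : B ⊗[A] B) :
    α ∈ J.map (algebraMap A (B ⊗[A] B)) ↔ ∀ i, e.leftCoord i α ∈ J.map (algebraMap A B) := by
  change _ ↔ ∀ i, e.rightCoord i (TensorProduct.comm A B B α) ∈ _
  rw [← e.mem_map_algebraMap_iff_rightCoord]
  exact ⟨(TensorProduct.comm A B B).toLinearMap.apply_mem_map_algebraMap,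
    fun h => by
      simpa using (TensorProduct.comm A B B).symm.toLinearMap.apply_mem_map_algebraMap h⟩

noncomputable def outerCoord (i j : ι) : B ⊗[A] (B ⊗[A] B) →ₗ[A] B :=
  e.leftCoord i ∘ₗ (e.rightCoord j).lTensor B

@[simp]
theorem outerCoord_tmul_tmul (i j : ι) (x y z : B) :
    e.outerCoord i j (x ⊗ₜ (y ⊗ₜ z)) = (e.repr x i * e.repr z j) • y := by
  simp [outerCoord, mul_smul, smul_comm (e.repr x i)]

theorem outerCoord_mul (i j : ι) (γ δ : B ⊗[A] B) :
    e.outerCoord i j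
        (Algebra.TensorProduct.map (AlgHom.id A B) Algebra.TensorProduct.includeLeft γ *
          Algebra.TensorProduct.includeRight δ) =
      e.leftCoord i γ * e.rightCoord j δ := by
  induction γ using TensorProduct.induction_on with
  | zero => simp
  | add γ γ' hγ hγ' => simp only [map_add, add_mul, hγ, hγ']
  | tmul x y =>
    induction δ using TensorProduct.induction_on with
    | zero => simp
    | add δ δ' hδ hδ' => simp only [map_add, mul_add, hδ, hδ']
    | tmul u v => simp [mul_smul, smul_comm (e.repr x i)]

end Module.Basis

theorem stmt0_general {A B : Type*} [CommRing A] [CommRing B] [Algebra A B]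
    [Module.Free A B]
    (I I' I'' : Ideal A)
    (h : ∀ b b' : B, b * b' ∈ Ideal.map (algebraMap A B) I'' →
      b ∈ Ideal.map (algebraMap A B) I ∨ b' ∈ Ideal.map (algebraMap A B) I')
    (α β : B ⊗[A] B)
    (hαβ :
      (Algebra.TensorProduct.map (AlgHom.id A B)
          (Algebra.TensorProduct.includeLeft : B →ₐ[A] B ⊗[A] B) α) *
        (Algebra.TensorProduct.includeRight : B ⊗[A] B →ₐ[A] B ⊗[A] (B ⊗[A] B)) β ∈
        Ideal.map (algebraMap A (B ⊗[A] (B ⊗[A] B))) I'') :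
    α ∈ Ideal.map (algebraMap A (B ⊗[A] B)) I ∨
      β ∈ Ideal.map (algebraMap A (B ⊗[A] B)) I' := by
  let e := Module.Free.chooseBasis A B
  rw [e.mem_map_algebraMap_iff_leftCoord, e.mem_map_algebraMap_iff_rightCoord]
  by_contra! hc
  obtain ⟨⟨i, hi⟩, ⟨j, hj⟩⟩ := hc
  have hcoord := (e.outerCoord i j).apply_mem_map_algebraMap hαβ
  rw [e.outerCoord_mul] at hcoord
  exact (h _ _ hcoord).elim hi hj

/-- Let `A` be a commutative ring and `B` a finite free `A`-algebra.
Let `π₁₂, π₂₃ : B ⊗[A] B → B ⊗[A] B ⊗[A] B` send `b ⊗ b'` to `b ⊗ b' ⊗ 1` and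
`1 ⊗ b ⊗ b'` respectively.  If `I, I', I''` are ideals of `A` such that whenever
`b * b' ∈ I''·B` one has `b ∈ I·B` or `b' ∈ I'·B`, then for `α, β ∈ B ⊗[A] B`,
`π₁₂(α) * π₂₃(β) ∈ I''·(B ⊗ B ⊗ B)` implies `α ∈ I·(B ⊗ B)` or `β ∈ I'·(B ⊗ B)`. -/
theorem stmt0 {A B : Type*} [CommRing A] [CommRing B] [Algebra A B]
    [Module.Finite A B] [Module.Free A B]
    (I I' I'' : Ideal A)
    (h : ∀ b b' : B, b * b' ∈ Ideal.map (algebraMap A B) I'' →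
      b ∈ Ideal.map (algebraMap A B) I ∨ b' ∈ Ideal.map (algebraMap A B) I')
    (α β : B ⊗[A] B)
    (hαβ :
      (Algebra.TensorProduct.map (AlgHom.id A B)
          (Algebra.TensorProduct.includeLeft : B →ₐ[A] B ⊗[A] B) α) *
        (Algebra.TensorProduct.includeRight : B ⊗[A] B →ₐ[A] B ⊗[A] (B ⊗[A] B)) β ∈
        Ideal.map (algebraMap A (B ⊗[A] (B ⊗[A] B))) I'') :
    α ∈ Ideal.map (algebraMap A (B ⊗[A] B)) I ∨
      β ∈ Ideal.map (algebraMap A (B ⊗[A] B)) I' :=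
  stmt0_general I I' I'' h α β hαβ
end

section
/- Let A be a discrete valuation ring with maximal ideal 𝔪 whose integral closure in any finite extension of its fraction field is a finite A-module (i.e., A is Japanese/N-2), and let B be a local A-algebra that is an integral domain and finite free as an A-module. Assume there exists m > 0 such that b^m ∈ A for every b ∈ B. Then there exists r > 0 such that for all b, b' ∈ B, if b ∉ 𝔪·B and b' ∉ 𝔪·B, then b·b' ∉ 𝔪^r·B. -/
/-!
Since `b ^ m ∈ A` for every `b ∈ B`, the fraction field `L` of `B` is obtained from `B` by
inverting only the nonzero elements of `A`; hence `L` is finite over `Frac A`, the integral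
closure `Ā` of `A` in `L` is a finite `A`-module, and some `0 ≠ d ∈ A` satisfies `d • Ā ⊆ B`.
Write `d ∣ ϖ ^ e` for a uniformizer `ϖ`. If `b ^ m = a` with `ϖ ^ ((e + 1) * m) ∣ a`, then
`b / (d * ϖ)` is integral over `A`, its `m`-th power lying in `A`, so `ϖ ∣ b` in `B`.
Finally, if `ϖ ^ (2 * (e + 1))` divides `b * b'` in `B`, then `ϖ ^ (2 * (e + 1) * m)` divides
`b ^ m * b' ^ m` in `A`, so `ϖ ^ ((e + 1) * m)` divides `b ^ m` or `b' ^ m`, and `b` or `b'`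
lies in `𝔪 B`.
-/

open scoped nonZeroDivisors
open IsLocalization Algebra

theorem Prime.pow_dvd_or_pow_dvd_of_pow_add_dvd_mul {α : Type*} [CommMonoidWithZero α]
    [IsCancelMulZero α] {p a b : α} (hp : Prime p) {i j : ℕ} (h : p ^ (i + j) ∣ a * b) :
    p ^ i ∣ a ∨ p ^ j ∣ b := by
  simp only [pow_dvd_iff_le_emultiplicity, emultiplicity_mul hp, Nat.cast_add] at h ⊢
  by_contra! hlt
  exact (ENat.add_lt_add hlt.1 hlt.2).not_ge h

theorem IsDiscreteValuationRing.mem_map_maximalIdeal_pow_iff {A B : Type*} [CommRing A]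
    [IsDomain A] [IsDiscreteValuationRing A] [CommRing B] [Algebra A B] {ϖ : A}
    (hϖ : Irreducible ϖ) (k : ℕ) (b : B) :
    b ∈ (IsLocalRing.maximalIdeal A ^ k).map (algebraMap A B) ↔ algebraMap A B ϖ ^ k ∣ b := by
  rw [(irreducible_iff_uniformizer ϖ).mp hϖ, Ideal.span_singleton_pow, Ideal.map_span,
    Set.image_singleton, Ideal.mem_span_singleton, map_pow]

section

variable {A B : Type*} [CommRing A] [CommRing B] [Algebra A B] {m : ℕ}

theorem pow_dvd_of_algebraMap_dvd (hinj : Function.Injective (algebraMap A B))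
    (hpow : ∀ b : B, ∃ a : A, algebraMap A B a = b ^ m) {a c : A} {b : B}
    (hab : algebraMap A B a = b ^ m) (hcb : algebraMap A B c ∣ b) : c ^ m ∣ a := by
  obtain ⟨e, rfl⟩ := hcb
  obtain ⟨a', ha'⟩ := hpow e
  exact ⟨a', hinj (by rw [hab, map_mul, ha', map_pow, mul_pow])⟩

theorem isLocalization_algebraMapSubmonoid_of_pow_mem_range [IsDomain A] [IsDomain B]
    [FaithfulSMul A B] (hm : m ≠ 0) (hpow : ∀ b : B, ∃ a : A, algebraMap A B a = b ^ m)
    (L : Type*) [CommRing L] [Algebra B L] [IsFractionRing B L] :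
    IsLocalization (algebraMapSubmonoid B A⁰) L := by
  refine (iff_of_le_of_exists_dvd _ B⁰
    (algebraMapSubmonoid_le_nonZeroDivisors_of_faithfulSMul B le_rfl) fun s hs ↦ ?_).mpr ‹_›
  obtain ⟨a, ha⟩ := hpow s
  refine ⟨s ^ m, ⟨a, mem_nonZeroDivisors_of_ne_zero ?_, ha⟩, dvd_pow_self s hm⟩
  rintro rfl
  exact nonZeroDivisors.ne_zero (pow_mem hs m) (by rw [← ha, map_zero])

theorem exists_smul_isInteger_of_isIntegral {L : Type*} [CommRing L] [Algebra A L]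
    [Algebra B L] [IsScalarTower A B L] (S : Submonoid A)
    [IsLocalization (algebraMapSubmonoid B S) L] [Module.Finite A (integralClosure A L)] :
    ∃ s ∈ S, ∀ x : L, IsIntegral A x → IsInteger B (s • x) := by
  obtain ⟨t, ht⟩ := Module.Finite.fg_top (R := A) (M := integralClosure A L)
  obtain ⟨⟨_, s, hs, rfl⟩, hst⟩ :=
    exist_integer_multiples (algebraMapSubmonoid B S) t (fun c ↦ (c : L))
  let P : Submodule A (integralClosure A L) :=
    { carrier := {c | IsInteger B (algebraMap A B s • (c : L))}
      add_mem' := fun {c d} hc hd ↦ by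
        simpa only [Set.mem_ofPred_eq, Subalgebra.coe_add, smul_add] using isInteger_add hc hd
      zero_mem' := by simpa using isInteger_zero
      smul_mem' := fun a c hc ↦ by
        change IsInteger B (algebraMap A B s • a • (c : L))
        rw [smul_comm, ← algebraMap_smul B a]
        exact isInteger_smul hc }
  have htP : (t : Set (integralClosure A L)) ⊆ P := fun c hc ↦ hst c hc
  refine ⟨s, hs, fun x hx ↦ ?_⟩
  have hxP : (⟨x, hx⟩ : integralClosure A L) ∈ P := Submodule.span_le.mpr htP (ht ▸ trivial)
  exact (algebraMap_smul B s x).symm ▸ hxP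

theorem algebraMap_dvd_of_mul_pow_dvd {L : Type*} [Field L] [Algebra A L] [Algebra B L]
    [IsScalarTower A B L] [FaithfulSMul A L] [FaithfulSMul B L]
    (hm : m ≠ 0) {d c a : A} {b : B} (hd0 : d ≠ 0) (hc0 : c ≠ 0)
    (hd : ∀ x : L, IsIntegral A x → IsInteger B (d • x))
    (hab : algebraMap A B a = b ^ m) (hdvd : (d * c) ^ m ∣ a) : algebraMap A B c ∣ b := by
  obtain ⟨e, rfl⟩ := hdvd
  have hdc : algebraMap A L (d * c) ≠ 0 := by simp [hd0, hc0]
  set x := algebraMap B L b / algebraMap A L (d * c)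
  have hxm : x ^ m = algebraMap A L e := by
    rw [div_pow, ← map_pow, ← hab, ← IsScalarTower.algebraMap_apply, map_mul, map_pow,
      mul_div_cancel_left₀ _ (pow_ne_zero _ hdc)]
  have hx : IsIntegral A x :=
    ⟨Polynomial.X ^ m - Polynomial.C e, Polynomial.monic_X_pow_sub_C e hm, by simp [hxm]⟩
  obtain ⟨y, hy⟩ := hd x hx
  refine ⟨y, FaithfulSMul.algebraMap_injective B L (Eq.symm ?_)⟩
  rw [map_mul, hy, ← IsScalarTower.algebraMap_apply, Algebra.smul_def, ← mul_assoc, ← map_mul,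
    mul_comm c d, mul_div_cancel₀ _ hdc]

end

universe u

theorem stmt1_general {A : Type u} [CommRing A] [IsDomain A] [IsDiscreteValuationRing A]
    (hJapanese : ∀ (L : Type u) [Field L] [Algebra A L] [Algebra (FractionRing A) L]
      [IsScalarTower A (FractionRing A) L],
      FiniteDimensional (FractionRing A) L → Module.Finite A (integralClosure A L))
    {B : Type u} [CommRing B] [IsDomain B] [Algebra A B]
    [Module.Finite A B] [Module.Free A B]
    (m : ℕ) (hm : 0 < m) (hpow : ∀ b : B, ∃ a : A, algebraMap A B a = b ^ m) :
    ∃ r : ℕ, 0 < r ∧ ∀ b b' : B,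
      b ∉ Ideal.map (algebraMap A B) (IsLocalRing.maximalIdeal A) →
      b' ∉ Ideal.map (algebraMap A B) (IsLocalRing.maximalIdeal A) →
      b * b' ∉ Ideal.map (algebraMap A B) (IsLocalRing.maximalIdeal A ^ r) := by
  obtain ⟨ϖ, hϖ⟩ := IsDiscreteValuationRing.exists_irreducible A
  let L := FractionRing B
  let _ : Algebra (FractionRing A) L := FractionRing.liftAlgebra A L
  have := FractionRing.isScalarTower_liftAlgebra A L
  have := isLocalization_algebraMapSubmonoid_of_pow_mem_range hm.ne' hpow L
  have := hJapanese L (Module.Finite.of_isLocalization A B A⁰)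
  obtain ⟨d, hdA, hd⟩ := exists_smul_isInteger_of_isIntegral (B := B) (L := L) A⁰
  have hd0 : d ≠ 0 := nonZeroDivisors.ne_zero hdA
  obtain ⟨e, u, rfl⟩ := IsDiscreteValuationRing.eq_unit_mul_pow_irreducible hd0 hϖ
  have hdϖ : ↑u * ϖ ^ e * ϖ ∣ ϖ ^ (e + 1) := by rw [mul_assoc, ← pow_succ, Units.mul_left_dvd]
  have hmem (k : ℕ) (b : B) := IsDiscreteValuationRing.mem_map_maximalIdeal_pow_iff hϖ k b
  have hmaximal (b : B) (a : A) (hab : algebraMap A B a = b ^ m)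
      (hdvd : ϖ ^ ((e + 1) * m) ∣ a) : b ∈ (IsLocalRing.maximalIdeal A).map (algebraMap A B) := by
    rw [← pow_one (IsLocalRing.maximalIdeal A), hmem, pow_one]
    refine algebraMap_dvd_of_mul_pow_dvd (L := L) hm.ne' hd0 hϖ.ne_zero hd hab (dvd_trans ?_ hdvd)
    rw [pow_mul]
    exact pow_dvd_pow_of_dvd hdϖ m
  refine ⟨2 * (e + 1), by omega, fun b b' hb hb' hbb' ↦ ?_⟩
  obtain ⟨a, ha⟩ := hpow b
  obtain ⟨a', ha'⟩ := hpow b'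
  have hdvd : ϖ ^ ((e + 1) * m + (e + 1) * m) ∣ a * a' := by
    rw [← two_mul, ← mul_assoc, pow_mul]
    exact pow_dvd_of_algebraMap_dvd (FaithfulSMul.algebraMap_injective A B) hpow
      (by rw [map_mul, ha, ha', mul_pow]) (by rwa [hmem, ← map_pow] at hbb')
  rcases hϖ.prime.pow_dvd_or_pow_dvd_of_pow_add_dvd_mul hdvd with h | h
  exacts [hb (hmaximal b a ha h), hb' (hmaximal b' a' ha' h)]

/-- Let `A` be a Japanese (N-2) discrete valuation ring with maximal
ideal `𝔪`, and `B` a finite free local `A`-algebra which is an integral domain, with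
`b ^ m ∈ A` for all `b ∈ B` for some `m > 0`.  Then there is `r > 0` such that for all
`b, b' ∈ B`, if `b ∉ 𝔪·B` and `b' ∉ 𝔪·B` then `b * b' ∉ 𝔪^r·B`. -/
theorem stmt1 {A : Type u} [CommRing A] [IsDomain A] [IsDiscreteValuationRing A]
    (hJapanese : ∀ (L : Type u) [Field L] [Algebra A L] [Algebra (FractionRing A) L]
      [IsScalarTower A (FractionRing A) L],
      FiniteDimensional (FractionRing A) L → Module.Finite A (integralClosure A L))
    {B : Type u} [CommRing B] [IsDomain B] [IsLocalRing B] [Algebra A B]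
    [Module.Finite A B] [Module.Free A B]
    (m : ℕ) (hm : 0 < m) (hpow : ∀ b : B, ∃ a : A, algebraMap A B a = b ^ m) :
    ∃ r : ℕ, 0 < r ∧ ∀ b b' : B,
      b ∉ Ideal.map (algebraMap A B) (IsLocalRing.maximalIdeal A) →
      b' ∉ Ideal.map (algebraMap A B) (IsLocalRing.maximalIdeal A) →
      b * b' ∉ Ideal.map (algebraMap A B) (IsLocalRing.maximalIdeal A ^ r) :=
  stmt1_general hJapanese m hm hpow
end

section
/- Let K be a separably closed field and X a K-form of affine n-space (i.e., X_L ≅ 𝔸ⁿ_L for some finite extension L/K). Then the Picard group Pic(X) is a p-power torsion abelian group if char(K) = p > 0, and trivial if char(K) = 0. -/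
universe u

open TensorProduct

/-!
Base change along `K → L` turns `A` into `B := A ⊗[K] L ≅ L[x₁, …, xₙ]`, a UFD, so every
invertible fractional ideal `I` of `A` becomes principal over `B`: `I B = t B`. As `K` is
separably closed, `L / K` is purely inseparable, so `t ^ q ^ k` lies in `Frac A` for `q` the
exponential characteristic of `K`. Hence `I ^ q ^ k` and a principal ideal of `A` have the same
extension to `B`, and since `B` is faithfully flat over `A` they are equal. In characteristic
zero `q = 1`.
-/

open scoped nonZeroDivisors

namespace FractionalIdeal

variable {A K : Type*} [CommRing A] [Field K] [Algebra A K] [IsFractionRing A K]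

theorem spanSingleton_mul_spanSingleton_inv_mul_coeIdeal {x : K} (hx : x ≠ 0) (y : A)
    (I : Ideal A) :
    spanSingleton A⁰ (x * algebraMap A K y) * (spanSingleton A⁰ x⁻¹ * I) =
      ((Ideal.span {y} * I : Ideal A) : FractionalIdeal A⁰ K) := by
  rw [← mul_assoc, spanSingleton_mul_spanSingleton, mul_comm x, mul_assoc, mul_inv_cancel₀ hx,
    mul_one, coeIdeal_mul, coeIdeal_span_singleton]

variable [IsDomain A] (L B : Type*) [CommRing B] [IsDomain B] [Algebra A B]
  [Module.IsTorsionFree A B] [Field L] [Algebra B L] [IsFractionRing B L]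

/- Clearing the denominators of `I` and `J` reduces the claim to integral ideals, where it is
the injectivity of `Ideal.map` along a faithfully flat algebra. -/
theorem extendedHom_injective_of_faithfullyFlat [Module.FaithfullyFlat A B] :
    Function.Injective (extendedHom L B : FractionalIdeal A⁰ K → FractionalIdeal B⁰ L) := by
  intro I J hIJ
  obtain ⟨a, I₀, ha, rfl⟩ := exists_eq_spanSingleton_mul I
  obtain ⟨b, J₀, hb, rfl⟩ := exists_eq_spanSingleton_mul J
  have ha' : algebraMap A K a ≠ 0 := (map_ne_zero_iff _ (IsFractionRing.injective A K)).2 ha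
  have hb' : algebraMap A K b ≠ 0 := (map_ne_zero_iff _ (IsFractionRing.injective A K)).2 hb
  have hclearI := spanSingleton_mul_spanSingleton_inv_mul_coeIdeal ha' b I₀
  have hclearJ := spanSingleton_mul_spanSingleton_inv_mul_coeIdeal hb' a J₀
  rw [mul_comm (algebraMap A K b)] at hclearJ
  have hnum : Ideal.span {b} * I₀ = Ideal.span {a} * J₀ := by
    apply Ideal.map_injective_of_faithfullyFlat (B := B)
    apply coeIdeal_injective (R := B) (K := L)
    dsimp only
    rw [← extendedHom_coeIdeal_eq_map (K := K), ← extendedHom_coeIdeal_eq_map (K := K),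
      ← hclearI, ← hclearJ, map_mul, hIJ, ← map_mul]
  have hunit : IsUnit (spanSingleton A⁰ (algebraMap A K a * algebraMap A K b)) :=
    IsUnit.of_mul_eq_one _ (spanSingleton_mul_inv K (mul_ne_zero ha' hb'))
  apply hunit.mul_left_cancel
  rw [hclearI, hnum, ← hclearJ]

end FractionalIdeal

theorem IsFractionRing.exists_map_eq_pow_pow {A B K L : Type*} [CommRing A] [CommRing B]
    [IsDomain B] [Field K] [Field L] [Algebra A K] [IsFractionRing A K] [Algebra B L]
    [IsFractionRing B L] {f : A →+* B} (hf : Function.Injective f) {q : ℕ}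
    (hpow : ∀ b : B, ∃ n, b ^ q ^ n ∈ f.range) (t : L) :
    ∃ n, ∃ s : K, IsFractionRing.map hf s = t ^ q ^ n := by
  obtain ⟨r, s, -, rfl⟩ := IsFractionRing.div_surjective (A := B) t
  obtain ⟨n, a, ha⟩ := hpow r
  obtain ⟨m, c, hc⟩ := hpow s
  refine ⟨n + m, algebraMap A K (a ^ q ^ m) / algebraMap A K (c ^ q ^ n), ?_⟩
  simp only [map_div₀, IsFractionRing.map, IsLocalization.map_eq]
  rw [map_pow f, map_pow f, ha, hc, ← pow_mul, ← pow_mul, ← pow_add, ← pow_add, add_comm m,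
    div_pow, map_pow, map_pow]

theorem ClassGroup.exists_pow_pow_eq_one_of_faithfullyFlat {A B : Type*} [CommRing A]
    [IsDomain A] [CommRing B] [IsDomain B] [Algebra A B] [Module.FaithfullyFlat A B]
    [Subsingleton (ClassGroup B)] {q : ℕ}
    (hpow : ∀ b : B, ∃ n, b ^ q ^ n ∈ (algebraMap A B).range) (c : ClassGroup A) :
    ∃ n, c ^ q ^ n = 1 := by
  refine ClassGroup.induction (FractionRing A) (fun I => ?_) c
  have hext : ClassGroup.extendedHom A B (ClassGroup.mk _ I) = 1 := Subsingleton.elim _ _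
  rw [ClassGroup.extendedHom_mk, ClassGroup.mk_eq_one_iff, FractionalIdeal.isPrincipal_iff]
    at hext
  obtain ⟨t, ht⟩ := hext
  obtain ⟨n, s, hs⟩ := IsFractionRing.exists_map_eq_pow_pow (K := FractionRing A)
    (FaithfulSMul.algebraMap_injective A B) hpow t
  have hpowI : (I : FractionalIdeal A⁰ (FractionRing A)) ^ q ^ n =
      FractionalIdeal.spanSingleton A⁰ s := by
    apply FractionalIdeal.extendedHom_injective_of_faithfullyFlat (FractionRing B) B
    rw [map_pow, FractionalIdeal.extendedHom_spanSingleton, hs,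
      ← FractionalIdeal.spanSingleton_pow, ← ht]
    rfl
  refine ⟨n, ?_⟩
  rw [← map_pow, ClassGroup.mk_eq_one_iff, FractionalIdeal.isPrincipal_iff,
    Units.val_pow_eq_pow_val, hpowI]
  exact ⟨s, rfl⟩

/-- Let `K` be a separably closed field and `X = Spec A` a `K`-form
of affine `n`-space, i.e. `L ⊗_K A ≅ L[x₁, …, xₙ]` for some finite extension `L/K`.
Then the Picard group of `X` — which, `A` being a domain, is the group `ClassGroup A`
of invertible fractional ideals modulo principal ones — is `p`-power torsion if
`char K = p > 0`, and trivial if `char K = 0`. -/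
theorem stmt17 {K : Type u} [Field K] [IsSepClosed K]
    {A : Type u} [CommRing A] [IsDomain A] [Algebra K A]
    (n : ℕ) (L : Type u) [Field L] [Algebra K L] [FiniteDimensional K L]
    (hform : Nonempty ((L ⊗[K] A) ≃ₐ[L] MvPolynomial (Fin n) L)) :
    (∀ p : ℕ, p.Prime → CharP K p →
      ∀ c : ClassGroup A, ∃ k : ℕ, c ^ (p ^ k) = 1) ∧
    (CharZero K → ∀ c : ClassGroup A, c = 1) := by
  obtain ⟨e⟩ := hform
  let e' : A ⊗[K] L ≃* MvPolynomial (Fin n) L :=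
    ((Algebra.TensorProduct.comm K A L).trans (e.restrictScalars K)).toMulEquiv
  have : IsDomain (A ⊗[K] L) := e'.isDomain
  have : UniqueFactorizationMonoid (A ⊗[K] L) := e'.symm.uniqueFactorizationMonoid inferInstance
  have torsion (q : ℕ) [ExpChar K q] (c : ClassGroup A) : ∃ k, c ^ q ^ k = 1 :=
    ClassGroup.exists_pow_pow_eq_one_of_faithfullyFlat (B := A ⊗[K] L)
      (IsPurelyInseparable.exists_pow_pow_mem_range_tensorProduct_of_expChar q) c
  refine ⟨fun p hp _ => ?_, fun _ c => ?_⟩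
  · have : ExpChar K p := ExpChar.prime hp
    exact torsion p
  · simpa using torsion 1 c
end
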